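/- For n ≥ 2 firms with qualities i.i.d. uniform on [0,1], assigned fixed thresholds θ₁ ≤ θ₂ ≤ ⋯ ≤ θₙ in [0,1], the expected number of inverted pairs equals (1/2)·Σ_{i<j} [θᵢ² + (θⱼ - θᵢ)² + (1 - θⱼ)²]. This function of (θ₁,…,θₙ) is minimized over the ordered simplex at θᵢ = (n + 2(i-1))/(4n - 2), and the minimum value is n(n-1)(5n-4)/(24(2n-1)). -/

import Mathlib

open MeasureTheory Set

/-- `x` and `y` lie in the same interval of the partition induced by thresholds `θ₀ ≤ θ₁`. -/
def samePart (θ₀ θ₁ x y : ℝ) : Prop :=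
  (x < min θ₀ θ₁ ∧ y < min θ₀ θ₁) ∨
  (min θ₀ θ₁ ≤ x ∧ x < max θ₀ θ₁ ∧ min θ₀ θ₁ ≤ y ∧ y < max θ₀ θ₁) ∨
  (max θ₀ θ₁ ≤ x ∧ max θ₀ θ₁ ≤ y)

/-- `(1/2)·Σ_{i<j} [θᵢ² + (θⱼ - θᵢ)² + (1 - θⱼ)²]`. -/
noncomputable def invSum (n : ℕ) (θ : Fin n → ℝ) : ℝ :=
  (1/2) * ∑ i : Fin n, ∑ j : Fin n,
    (if i < j then (θ i)^2 + (θ j - θ i)^2 + (1 - θ j)^2 else 0)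

/-- The optimal thresholds `θᵢ = (n + 2(i-1))/(4n-2)` (here `i` is 0-indexed). -/
noncomputable def θstar (n : ℕ) (i : Fin n) : ℝ := ((n : ℝ) + 2 * (i : ℕ)) / (4 * n - 2)

/-!
A pair `i < j` is inverted with probability `1/2` exactly when both qualities fall in the same
cell of the partition `[0, θᵢ) ∪ [θᵢ, θⱼ) ∪ [θⱼ, 1]`, an event of probability
`θᵢ² + (θⱼ - θᵢ)² + (1 - θⱼ)²`. Summing over pairs, `invSum` equals `n(n-1)/4` plus the
quadratic `((2n-1) Σ θᵢ² - (Σ θᵢ)²)/2 - Σ i θᵢ`. Its quadratic part is positive semidefinite by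
Cauchy–Schwarz, so its critical point `θstar` is a global minimiser, even on all of `ℝⁿ`.
-/

lemma sum_fin_val (n : ℕ) : ∑ i : Fin n, (i : ℝ) = n * (n - 1) / 2 := by
  induction n with
  | zero => simp
  | succ m ih => rw [Fin.sum_univ_castSucc]; simp [ih]; ring

lemma sum_fin_val_sq (n : ℕ) : ∑ i : Fin n, (i : ℝ) ^ 2 = n * (n - 1) * (2 * n - 1) / 6 := by
  induction n with
  | zero => simp
  | succ m ih => rw [Fin.sum_univ_castSucc]; simp [ih]; ring

lemma sum_sum_ite_lt_of_symm {ι : Type*} [Fintype ι] [LinearOrder ι] (g : ι → ι → ℝ)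
    (hg : ∀ i j, g i j = g j i) :
    ∑ i, ∑ j, (if i < j then g i j else 0) = ((∑ i, ∑ j, g i j) - ∑ i, g i i) / 2 := by
  have hsplit : ∀ i j, g i j =
      (if i < j then g i j else 0) + (if j < i then g j i else 0) + (if i = j then g i i else 0) := by
    intro i j
    rcases lt_trichotomy i j with h | rfl | h
    · simp [h, h.not_gt, h.ne]
    · simp
    · simp [h, h.not_gt, h.ne', hg j i]
  have htotal : ∑ i, ∑ j, g i j = ∑ i, ∑ j, (if i < j then g i j else 0)
      + ∑ i, ∑ j, (if j < i then g j i else 0) + ∑ i, ∑ j, (if i = j then g i i else 0) := by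
    simp only [← Finset.sum_add_distrib]
    exact Finset.sum_congr rfl fun i _ => Finset.sum_congr rfl fun j _ => hsplit i j
  have hswap : ∑ i, ∑ j, (if j < i then g j i else 0) = ∑ i, ∑ j, (if i < j then g i j else 0) :=
    Finset.sum_comm
  have hdiag : ∑ i, ∑ j, (if i = j then g i i else 0) = ∑ i, g i i := by simp
  linarith

lemma sum_sum_ite_lt_eq_sum_val_mul {n : ℕ} (c : Fin n → ℝ) :
    ∑ i : Fin n, ∑ j : Fin n, (if i < j then c j else 0) = ∑ j : Fin n, (j : ℝ) * c j := by
  rw [Finset.sum_comm]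
  refine Finset.sum_congr rfl fun j _ => ?_
  rw [← Finset.sum_filter, Finset.filter_gt_eq_Iio, Finset.sum_const, Fin.card_Iio, nsmul_eq_mul]

section QuadLoss

variable {ι : Type*} [Fintype ι]

/-- The gradient of `quadLoss c b` at `x` is `c xᵢ - Σ x - bᵢ`, so the hypothesis `hcrit` of the
lemmas below says that `x₀` is a critical point. -/
noncomputable def quadLoss (c : ℝ) (b x : ι → ℝ) : ℝ :=
  (c * ∑ i, x i ^ 2 - (∑ i, x i) ^ 2) / 2 - ∑ i, b i * x i

variable {c : ℝ} {b x₀ : ι → ℝ}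

lemma quadLoss_sub_of_crit (hcrit : ∀ i, c * x₀ i - ∑ j, x₀ j = b i) (x : ι → ℝ) :
    quadLoss c b x - quadLoss c b x₀ =
      (c * ∑ i, (x i - x₀ i) ^ 2 - (∑ i, (x i - x₀ i)) ^ 2) / 2 := by
  simp only [quadLoss, ← hcrit, sub_sq, sub_mul, Finset.sum_add_distrib, Finset.sum_sub_distrib,
    ← Finset.mul_sum, mul_assoc, ← sq, mul_comm (x₀ _) (x _)]
  ring

lemma quadLoss_of_crit (hcrit : ∀ i, c * x₀ i - ∑ j, x₀ j = b i) :
    quadLoss c b x₀ = -(∑ i, b i * x₀ i) / 2 := by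
  simp only [quadLoss, ← hcrit, sub_mul, Finset.sum_sub_distrib, ← Finset.mul_sum, mul_assoc, ← sq]
  ring

lemma quadLoss_le_of_crit (hc : (Fintype.card ι : ℝ) ≤ c)
    (hcrit : ∀ i, c * x₀ i - ∑ j, x₀ j = b i) (x : ι → ℝ) :
    quadLoss c b x₀ ≤ quadLoss c b x := by
  rw [← sub_nonneg, quadLoss_sub_of_crit hcrit]
  have hcs := sq_sum_le_card_mul_sum_sq (s := Finset.univ) (f := fun i => x i - x₀ i)
  have hsq : 0 ≤ ∑ i, (x i - x₀ i) ^ 2 := Finset.sum_nonneg fun i _ => sq_nonneg _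
  rw [Finset.card_univ] at hcs
  nlinarith

end QuadLoss

lemma invSum_eq_quadLoss (n : ℕ) (θ : Fin n → ℝ) :
    invSum n θ = quadLoss (2 * n - 1) (fun i : Fin n => (i : ℝ)) θ + n * (n - 1) / 4 := by
  have hexpand : ∀ i j : Fin n, (if i < j then θ i ^ 2 + (θ j - θ i) ^ 2 + (1 - θ j) ^ 2 else 0) =
      (if i < j then 2 * θ i ^ 2 + 2 * θ j ^ 2 - 2 * θ i * θ j else 0)
        + (if i < j then 1 - 2 * θ j else 0) := by
    intro i j; split_ifs <;> ring
  simp only [invSum, hexpand, Finset.sum_add_distrib]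
  rw [sum_sum_ite_lt_of_symm _ (fun i j => by ring), sum_sum_ite_lt_eq_sum_val_mul]
  simp only [quadLoss, Finset.sum_add_distrib, Finset.sum_sub_distrib, ← Finset.mul_sum, mul_sub,
    mul_assoc, Finset.sum_const, Finset.card_univ, Fintype.card_fin, nsmul_eq_mul, sum_fin_val,
    ← Finset.sum_mul, ← sq, mul_left_comm _ (2 : ℝ)]
  ring

lemma natCast_four_mul_sub_two_ne_zero (n : ℕ) : (4 * n - 2 : ℝ) ≠ 0 := by
  intro h
  have : (2 * n : ℝ) = 1 := by linarith
  norm_cast at this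
  omega

lemma θstar_mul (n : ℕ) (i : Fin n) : θstar n i * (4 * n - 2) = n + 2 * i :=
  div_mul_cancel₀ _ (natCast_four_mul_sub_two_ne_zero n)

lemma sum_θstar (n : ℕ) : ∑ i, θstar n i = n / 2 := by
  refine mul_right_cancel₀ (natCast_four_mul_sub_two_ne_zero n) ?_
  rw [Finset.sum_mul]
  simp only [θstar_mul, Finset.sum_add_distrib, ← Finset.mul_sum, sum_fin_val, Finset.sum_const,
    Finset.card_univ, Fintype.card_fin, nsmul_eq_mul]
  ring

lemma θstar_crit (n : ℕ) (i : Fin n) : (2 * n - 1) * θstar n i - ∑ j, θstar n j = i := by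
  rw [sum_θstar]
  linear_combination (1 / 2 : ℝ) * θstar_mul n i

lemma invSum_θstar (n : ℕ) :
    invSum n (θstar n) = n * (n - 1 : ℝ) * (5 * n - 4) / (24 * (2 * n - 1)) := by
  have hsum : (∑ i : Fin n, (i : ℝ) * θstar n i) * (4 * n - 2) =
      n * (n * (n - 1) / 2) + 2 * (n * (n - 1) * (2 * n - 1) / 6) := by
    simp only [Finset.sum_mul, mul_assoc, θstar_mul, mul_add, Finset.sum_add_distrib,
      mul_left_comm _ (2 : ℝ), ← Finset.mul_sum, ← sq, sum_fin_val_sq]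
    rw [← Finset.sum_mul, sum_fin_val]
    ring
  have hden : (24 * (2 * n - 1) : ℝ) ≠ 0 := fun h => natCast_four_mul_sub_two_ne_zero n (by linarith)
  rw [invSum_eq_quadLoss, quadLoss_of_crit (θstar_crit n), eq_div_iff hden]
  linear_combination (-6 : ℝ) * hsum

lemma samePart_setOf_eq {a b : ℝ} (h0 : 0 ≤ a) (hab : a ≤ b) (hb1 : b ≤ 1) :
    {p : ℝ × ℝ | p.1 ∈ Icc 0 1 ∧ p.2 ∈ Icc 0 1 ∧ samePart a b p.1 p.2} =
      Ico 0 a ×ˢ Ico 0 a ∪ Ico a b ×ˢ Ico a b ∪ Icc b 1 ×ˢ Icc b 1 := by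
  ext ⟨x, y⟩
  simp only [samePart, min_eq_left hab, max_eq_right hab, mem_ofPred_eq, mem_Icc, mem_Ico,
    mem_union, mem_prod]
  constructor
  · rintro ⟨⟨hx0, hx1⟩, ⟨hy0, hy1⟩, h | h | h⟩ <;> grind
  · rintro ((h | h) | h) <;> grind

lemma volume_samePart {a b : ℝ} (h0 : 0 ≤ a) (hab : a ≤ b) (hb1 : b ≤ 1) :
    (volume {p : ℝ × ℝ | p.1 ∈ Icc 0 1 ∧ p.2 ∈ Icc 0 1 ∧ samePart a b p.1 p.2}).toReal =
      a ^ 2 + (b - a) ^ 2 + (1 - b) ^ 2 := by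
  have hd₁ : Disjoint (Ico 0 a ×ˢ Ico 0 a) (Ico a b ×ˢ Ico a b) :=
    disjoint_prod.2 (Or.inl Ico_disjoint_Ico_same)
  have hd₂ : Disjoint (Ico 0 a ×ˢ Ico 0 a ∪ Ico a b ×ˢ Ico a b) (Icc b 1 ×ˢ Icc b 1) :=
    disjoint_union_left.2
      ⟨disjoint_prod.2 (Or.inl (disjoint_left.2 fun _ hx hx' => (hx.2.trans_le hab).not_ge hx'.1)),
        disjoint_prod.2 (Or.inl (disjoint_left.2 fun _ hx hx' => hx.2.not_ge hx'.1))⟩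
  rw [samePart_setOf_eq h0 hab hb1, measure_union hd₂ (measurableSet_Icc.prod measurableSet_Icc),
    measure_union hd₁ (measurableSet_Ico.prod measurableSet_Ico), Measure.volume_eq_prod,
    Measure.prod_prod, Measure.prod_prod, Measure.prod_prod, Real.volume_Ico, Real.volume_Ico,
    Real.volume_Icc]
  rw [sub_zero, ← ENNReal.ofReal_mul h0, ← ENNReal.ofReal_mul (sub_nonneg.2 hab),
    ← ENNReal.ofReal_mul (sub_nonneg.2 hb1), ← ENNReal.ofReal_add (by positivity) (by positivity),
    ← ENNReal.ofReal_add (by positivity) (by positivity), ENNReal.toReal_ofReal (by positivity)]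
  ring

/-- For `n` firms with i.i.d. uniform `[0,1]` qualities and fixed ordered thresholds
`θ₁ ≤ ⋯ ≤ θₙ` in `[0,1]`, the expected number of inverted pairs (a pair is inverted
with probability `1/2` exactly when both qualities lie in the same part of the
partition induced by the pair's thresholds) equals
`(1/2)·Σ_{i<j}[θᵢ² + (θⱼ-θᵢ)² + (1-θⱼ)²]`; this is minimized over the ordered
simplex at `θᵢ = (n+2(i-1))/(4n-2)`, with minimum value `n(n-1)(5n-4)/(24(2n-1))`. -/
theorem stmt_9 (n : ℕ) (hn : 2 ≤ n) (θ : Fin n → ℝ)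
    (hmono : Monotone θ) (hrange : ∀ i, θ i ∈ Icc (0:ℝ) 1) :
    (∑ i : Fin n, ∑ j : Fin n,
        (if i < j then
          (volume {p : ℝ × ℝ | p.1 ∈ Icc (0:ℝ) 1 ∧ p.2 ∈ Icc (0:ℝ) 1 ∧
              samePart (θ i) (θ j) p.1 p.2}).toReal / 2
        else 0))
      = invSum n θ ∧
    invSum n (θstar n) ≤ invSum n θ ∧
    invSum n (θstar n) = n * (n - 1 : ℝ) * (5 * n - 4) / (24 * (2 * n - 1)) := by
  have hcard : (Fintype.card (Fin n) : ℝ) ≤ 2 * n - 1 := by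
    have : (2 : ℝ) ≤ n := by exact_mod_cast hn
    rw [Fintype.card_fin]
    linarith
  refine ⟨?_, ?_, invSum_θstar n⟩
  · rw [invSum, Finset.mul_sum]
    refine Finset.sum_congr rfl fun i _ => ?_
    rw [Finset.mul_sum]
    refine Finset.sum_congr rfl fun j _ => ?_
    split_ifs with h
    · rw [volume_samePart (hrange i).1 (hmono h.le) (hrange j).2]
      ring
    · simp
  · rw [invSum_eq_quadLoss, invSum_eq_quadLoss, add_le_add_iff_right]
    exact quadLoss_le_of_crit hcard (θstar_crit n) θ
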